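/- Let ε > 0 and a ≠ b be real numbers, and let t : ℍ → ℝ be a bounded harmonic function which extends continuously to ℍ ∪ (−ε, 0) ∪ (0, ε), with t ≡ a on (−ε, 0) and t ≡ b on (0, ε). Let t* : ℍ → ℝ be a harmonic conjugate of t (i.e., t + i t* is holomorphic on ℍ). Then |t*(w)| → ∞ as w → 0 within ℍ; i.e., the height function of the conjugate zero mean curvature surface diverges at the point corresponding to the isotropic line. -/

import Mathlib

open Complex Set Function Filter Topology

/-- The open upper half-plane in `ℂ`. -/
def UHP : Set ℂ := {w : ℂ | 0 < w.im}

/-- A real-valued function on `ℂ ≅ ℝ²` is harmonic on a set if it is `C²` there and its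
Laplacian `f_xx + f_yy` vanishes at every point of the set. -/
def HarmonicOn (f : ℂ → ℝ) (s : Set ℂ) : Prop :=
  ContDiffOn ℝ 2 f s ∧
    ∀ z ∈ s, fderiv ℝ (fun w => fderiv ℝ f w 1) z 1 +
      fderiv ℝ (fun w => fderiv ℝ f w Complex.I) z Complex.I = 0

/-!
Subtract from `t + i t*` the function `b + (b - a) / π · i log w`, holomorphic on `ℍ`, whose real
part `b - (b - a) / π · arg w` has the same jump `a → b` at `0`. The difference `g` is holomorphic
with bounded real part, and `Re g → 0` along `(-ε, 0) ∪ (0, ε)`. On a half-disc, comparing `± Re g`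
with a multiple of the harmonic measure of the upper semicircle (maximum principle, with a
logarithmic penalty at the puncture `0`) gives `|Re g w| ≤ C · Im w` near `0`. Borel–Carathéodory
and the Cauchy estimate on discs of radius `Im w / 2` then bound `g'`, so `g` stays bounded near
`0`, and `t* = Im g + (b - a) / π · log |w|` diverges like `log |w|`.
-/

open Metric
open scoped Real

theorem isOpen_UHP : IsOpen UHP := isOpen_lt continuous_const continuous_im

theorem tendsto_log_norm_nhdsNE_zero {E : Type*} [NormedAddCommGroup E] :
    Tendsto (fun w : E => Real.log ‖w‖) (𝓝[≠] 0) atBot :=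
  Real.tendsto_log_nhdsGT_zero.comp tendsto_norm_nhdsNE_zero

theorem re_le_of_forall_mem_frontier_eventually_re_le {U : Set ℂ} (hU : IsOpen U)
    (hUb : Bornology.IsBounded U) {H : ℂ → ℂ} (hH : DifferentiableOn ℂ H U) {B : ℝ}
    (hfr : ∀ ζ ∈ frontier U, ∀ c > B, ∀ᶠ w in 𝓝[U] ζ, (H w).re ≤ c) {w : ℂ} (hw : w ∈ U) :
    (H w).re ≤ B := by
  refine le_of_forall_gt_imp_ge_of_dense fun c hc => ?_
  by_contra! hwc
  -- `V` stays away from `frontier U`, so the classical maximum principle applies to `exp ∘ H` on it.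
  set V := {z ∈ U | c < (H z).re}
  have hVU : V ⊆ U := sep_subset _ _
  have hV : IsOpen V := hH.continuousOn.isOpen_inter_preimage hU
    (isOpen_lt continuous_const continuous_re)
  have hclV : closure V ⊆ U := by
    intro ζ hζ
    by_contra hζU
    have hfrU : ζ ∈ frontier U := ⟨closure_mono hVU hζ, by rwa [hU.interior_eq]⟩
    have := mem_closure_iff_nhdsWithin_neBot.1 hζ
    have hev : ∀ᶠ z in 𝓝[V] ζ, (H z).re ≤ c := nhdsWithin_mono ζ hVU (hfr ζ hfrU c hc)
    obtain ⟨z, hz, hzV⟩ := (hev.and self_mem_nhdsWithin).exists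
    exact hz.not_gt hzV.2
  have hexp : DiffContOnCl ℂ (exp ∘ H) V :=
    ⟨(hH.mono hVU).cexp, (hH.continuousOn.mono hclV).cexp⟩
  have hfrV : ∀ z ∈ frontier V, ‖(exp ∘ H) z‖ ≤ Real.exp c := by
    intro z hz
    have hzU : z ∈ U := hclV hz.1
    have hzV : z ∉ V := by rw [hV.frontier_eq] at hz; exact hz.2
    simpa [norm_exp, V, hzU] using hzV
  have := norm_le_of_forall_mem_frontier_norm_le (hUb.subset hVU) hexp hfrV
    (subset_closure ⟨hw, hwc⟩)
  rw [comp_apply, norm_exp, Real.exp_le_exp] at this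
  exact this.not_gt hwc

theorem mem_frontier_UHP_inter_ball {d : ℝ} {ζ : ℂ} (hζ : ζ ∈ frontier (UHP ∩ ball 0 d)) :
    (ζ.im = 0 ∧ ‖ζ‖ ≤ d) ∨ (0 < ζ.im ∧ ‖ζ‖ = d) := by
  rw [(isOpen_UHP.inter isOpen_ball).frontier_eq] at hζ
  obtain ⟨hcl, hnot⟩ := hζ
  have hclosed : IsClosed ({z : ℂ | 0 ≤ z.im} ∩ closedBall 0 d) :=
    (isClosed_le continuous_const continuous_im).inter isClosed_closedBall
  have hsub : UHP ∩ ball 0 d ⊆ {z : ℂ | 0 ≤ z.im} ∩ closedBall 0 d :=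
    inter_subset_inter (fun z (hz : 0 < z.im) => hz.le) ball_subset_closedBall
  obtain ⟨him, hnorm⟩ := closure_minimal hsub hclosed hcl
  rw [mem_closedBall_zero_iff] at hnorm
  rcases (show 0 ≤ ζ.im from him).eq_or_lt with him | him
  · exact Or.inl ⟨him.symm, hnorm⟩
  · exact Or.inr ⟨him, hnorm.antisymm (not_lt.1 fun h => hnot ⟨him, mem_ball_zero_iff.2 h⟩)⟩

/-- The harmonic measure of the upper semicircle in the half-disc `UHP ∩ ball 0 d`: it vanishes on
the diameter and equals `1` on the arc. -/
noncomputable def arcMeasure (d : ℝ) (w : ℂ) : ℝ := 2 / π * arg ((d + w) / (d - w))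

section ArcMeasure

variable {d : ℝ} {w : ℂ}

theorem ofReal_sub_ne_zero_of_im_pos (d : ℝ) (hw : 0 < w.im) : (d : ℂ) - w ≠ 0 :=
  fun h => by simpa [hw.ne'] using congrArg im h

theorem im_add_div_sub (d : ℝ) (w : ℂ) :
    ((d + w) / (d - w)).im = 2 * d * w.im / normSq (d - w) := by
  simp only [div_im, add_im, add_re, sub_re, sub_im, ofReal_re, ofReal_im]
  ring

theorem re_add_div_sub (d : ℝ) (w : ℂ) :
    ((d + w) / (d - w)).re = (d ^ 2 - ‖w‖ ^ 2) / normSq (d - w) := by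
  simp only [div_re, add_im, add_re, sub_re, sub_im, ofReal_re, ofReal_im, Complex.sq_norm,
    normSq_apply]
  ring

theorem im_add_div_sub_pos (hd : 0 < d) (hw : 0 < w.im) : 0 < ((d + w) / (d - w)).im := by
  have := normSq_pos.2 (ofReal_sub_ne_zero_of_im_pos d hw)
  rw [im_add_div_sub]
  positivity

theorem add_div_sub_mem_slitPlane (hd : 0 < d) (hw : 0 < w.im) :
    (d + w) / (d - w) ∈ slitPlane :=
  mem_slitPlane_iff.2 (Or.inr (im_add_div_sub_pos hd hw).ne')

theorem differentiableAt_log_add_div_sub (hd : 0 < d) (hw : 0 < w.im) :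
    DifferentiableAt ℂ (fun w : ℂ => log ((d + w) / (d - w))) w :=
  ((differentiableAt_const _).add differentiableAt_id).div
    ((differentiableAt_const _).sub differentiableAt_id) (ofReal_sub_ne_zero_of_im_pos d hw)
    |>.clog (add_div_sub_mem_slitPlane hd hw)

theorem arcMeasure_nonneg (hd : 0 < d) (hw : 0 < w.im) : 0 ≤ arcMeasure d w :=
  mul_nonneg (by positivity) (arg_nonneg_iff.2 (im_add_div_sub_pos hd hw).le)

theorem tendsto_arcMeasure_of_norm_eq (hd : 0 < d) (hw : 0 < w.im) (hwd : ‖w‖ = d) :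
    Tendsto (arcMeasure d) (𝓝 w) (𝓝 1) := by
  have harg : arg ((d + w) / (d - w)) = π / 2 :=
    arg_eq_pi_div_two_iff.2 ⟨by simp [re_add_div_sub, hwd], im_add_div_sub_pos hd hw⟩
  have hcont : ContinuousAt (arcMeasure d) w :=
    continuousAt_const.mul ((continuousAt_arg (add_div_sub_mem_slitPlane hd hw)).comp
      (f := fun w : ℂ => (d + w) / (d - w))
      (by fun_prop (disch := exact ofReal_sub_ne_zero_of_im_pos d hw)))
  simpa [arcMeasure, harg, Real.pi_ne_zero] using hcont.tendsto

theorem arcMeasure_le_mul_im (hd : 0 < d) (hw : 0 < w.im) (hwd : ‖w‖ ≤ d / 2) :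
    arcMeasure d w ≤ 2 / d * w.im := by
  set z := ((d : ℂ) + w) / (d - w)
  have hden : 0 < normSq ((d : ℂ) - w) := normSq_pos.2 (ofReal_sub_ne_zero_of_im_pos d hw)
  have hnorm : ‖w‖ ^ 2 ≤ d ^ 2 / 4 := by nlinarith [norm_nonneg w]
  have hre : 0 < z.re := by rw [re_add_div_sub]; exact div_pos (by nlinarith) hden
  have harg : arg z ≤ z.im / z.re := by
    rcases (arg_nonneg_iff.2 (im_add_div_sub_pos hd hw).le).eq_or_lt with h | h
    · rw [← h]; exact div_nonneg (im_add_div_sub_pos hd hw).le hre.le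
    · rw [← tan_arg]
      exact (Real.lt_tan h ((le_abs_self _).trans_lt
        (abs_arg_lt_pi_div_two_iff.2 (Or.inl hre)))).le
  have hratio : z.im / z.re = 2 * d * w.im / (d ^ 2 - ‖w‖ ^ 2) := by
    rw [im_add_div_sub, re_add_div_sub, div_div_div_cancel_right₀ hden.ne']
  calc arcMeasure d w ≤ 2 / π * (2 * d * w.im / (d ^ 2 - ‖w‖ ^ 2)) := by
        rw [← hratio]; exact mul_le_mul_of_nonneg_left harg (by positivity)
    _ ≤ 2 / 3 * (2 * d * w.im / (3 / 4 * d ^ 2)) := by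
        gcongr ?_ * (_ / ?_)
        · exact div_nonneg (by positivity) (by nlinarith)
        · gcongr; exact Real.pi_gt_three.le
        · nlinarith
    _ = 16 / 9 * (w.im / d) := by field_simp; ring
    _ ≤ 2 * (w.im / d) := by gcongr; norm_num
    _ = 2 / d * w.im := by ring

end ArcMeasure

section Barrier

variable {d M : ℝ} {G : ℂ → ℂ}

theorem re_sub_mul_arcMeasure_add_log_le (hd : 0 < d) (hM : 0 ≤ M)
    (hG : DifferentiableOn ℂ G (UHP ∩ ball 0 d)) (hGM : ∀ w ∈ UHP ∩ ball 0 d, (G w).re ≤ M)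
    (hlim : ∀ x : ℝ, x ≠ 0 → |x| ≤ d →
      Tendsto (fun w => (G w).re) (𝓝[UHP ∩ ball 0 d] x) (𝓝 0))
    {η : ℝ} (hη : 0 < η) {w : ℂ} (hw : w ∈ UHP ∩ ball 0 d) :
    (G w).re - M * arcMeasure d w + η * Real.log (‖w‖ / d) ≤ 0 := by
  set Ω := UHP ∩ ball (0 : ℂ) d
  set H : ℂ → ℂ := fun w =>
    G w + (M * (2 / π) : ℝ) * (I * log ((d + w) / (d - w))) + η * log (w / d)
  have hH_re : ∀ z, (H z).re = (G z).re - M * arcMeasure d z + η * Real.log (‖z‖ / d) := by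
    intro z
    simp only [H, add_re, re_ofReal_mul, I_mul_re, log_re, log_im, norm_div, norm_real,
      Real.norm_eq_abs, abs_of_pos hd, arcMeasure]
    ring
  have hH : DifferentiableOn ℂ H Ω := by
    intro z hz
    have hz' : 0 < (z / d).im := by simpa using div_pos hz.1 hd
    refine ((hG z hz).add ?_).add ?_
    · exact (((differentiableAt_log_add_div_sub hd hz.1).const_mul I).const_mul _)
        |>.differentiableWithinAt
    · exact ((differentiableAt_id.div_const _).clog
        (mem_slitPlane_iff.2 (Or.inr hz'.ne'))).const_mul _ |>.differentiableWithinAt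
  have hlog_nonpos : ∀ z ∈ Ω, η * Real.log (‖z‖ / d) ≤ 0 := fun z hz =>
    mul_nonpos_of_nonneg_of_nonpos hη.le <| Real.log_nonpos (by positivity)
      ((div_le_one hd).2 (mem_ball_zero_iff.1 hz.2).le)
  have hH_le : ∀ z ∈ Ω, (H z).re ≤ (G z).re := fun z hz => by
    rw [hH_re]; nlinarith [hlog_nonpos z hz, arcMeasure_nonneg hd hz.1]
  rw [← hH_re]
  refine re_le_of_forall_mem_frontier_eventually_re_le (isOpen_UHP.inter isOpen_ball)
    (isBounded_ball.subset inter_subset_right) hH (fun ζ hζ c hc => ?_) hw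
  rcases mem_frontier_UHP_inter_ball hζ with ⟨hζim, hζd⟩ | ⟨hζim, hζd⟩
  · rcases eq_or_ne ζ 0 with rfl | hζ0
    · -- nothing is known about `G` at the puncture; the penalty `η log ‖z‖` tends to `-∞` there
      have hΩne : ∀ z ∈ Ω, z ≠ 0 := fun z hz => ne_of_apply_ne im hz.1.ne'
      have hbot : Tendsto (fun z : ℂ => M + η * (Real.log ‖z‖ - Real.log d)) (𝓝[Ω] 0) atBot :=
        tendsto_atBot_add_const_left _ M <| Tendsto.const_mul_atBot hη <|
          tendsto_atBot_add_const_right _ _ <|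
            tendsto_log_norm_nhdsNE_zero.mono_left (nhdsWithin_mono _ hΩne)
      filter_upwards [hbot.eventually_le_atBot c, self_mem_nhdsWithin] with z hz hzΩ
      rw [hH_re, Real.log_div (norm_ne_zero_iff.2 (hΩne z hzΩ)) hd.ne']
      nlinarith [hGM z hzΩ, arcMeasure_nonneg hd hzΩ.1]
    · have hζ : ζ = (ζ.re : ℂ) := ext rfl (by simp [hζim])
      have hre : ζ.re ≠ 0 := fun h => hζ0 (by rw [hζ, h, ofReal_zero])
      rw [hζ] at hζd ⊢
      filter_upwards [(hlim ζ.re hre (by simpa using hζd)).eventually (eventually_le_nhds hc),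
        self_mem_nhdsWithin] with z hz hzΩ using (hH_le z hzΩ).trans hz
  · have hto : Tendsto (fun z => M - M * arcMeasure d z) (𝓝[Ω] ζ) (𝓝 0) := by
      simpa using ((tendsto_const_nhds (x := M)).sub ((tendsto_arcMeasure_of_norm_eq hd hζim
        hζd).const_mul M)).mono_left nhdsWithin_le_nhds
    filter_upwards [hto.eventually (eventually_le_nhds hc), self_mem_nhdsWithin] with z hz hzΩ
    rw [hH_re]
    linarith [hGM z hzΩ, hlog_nonpos z hzΩ]

theorem re_le_mul_arcMeasure (hd : 0 < d) (hM : 0 ≤ M)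
    (hG : DifferentiableOn ℂ G (UHP ∩ ball 0 d)) (hGM : ∀ w ∈ UHP ∩ ball 0 d, (G w).re ≤ M)
    (hlim : ∀ x : ℝ, x ≠ 0 → |x| ≤ d →
      Tendsto (fun w => (G w).re) (𝓝[UHP ∩ ball 0 d] x) (𝓝 0))
    {w : ℂ} (hw : w ∈ UHP ∩ ball 0 d) :
    (G w).re ≤ M * arcMeasure d w := by
  have hto : Tendsto (fun η : ℝ => M * arcMeasure d w - η * Real.log (‖w‖ / d)) (𝓝[>] 0)
      (𝓝 (M * arcMeasure d w)) :=
    ((continuous_const.sub (continuous_id.mul continuous_const)).tendsto' (0 : ℝ) _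
      (by simp)).mono_left nhdsWithin_le_nhds
  exact ge_of_tendsto hto <| eventually_nhdsWithin_of_forall fun η (hη : 0 < η) => by
    linarith [re_sub_mul_arcMeasure_add_log_le hd hM hG hGM hlim hη hw]

end Barrier

theorem norm_deriv_le_of_abs_re_le {g : ℂ → ℂ} {c : ℂ} {ρ R : ℝ} (hρ : 0 < ρ) (hR : 0 < R)
    (hg : DifferentiableOn ℂ g (ball c ρ)) (hre : ∀ z ∈ ball c ρ, |(g z).re| ≤ R) :
    ‖deriv g c‖ ≤ 8 * R / ρ := by
  set f : ℂ → ℂ := fun z => g (c + z) - g c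
  have hf : DifferentiableOn ℂ f (ball 0 ρ) :=
    (hg.comp (differentiableOn_const c |>.add differentiableOn_id) fun z hz => by
      simpa using hz).sub_const _
  have hf_re : MapsTo f (ball 0 ρ) {z | z.re ≤ 2 * R} := fun z hz => by
    have h1 := hre (c + z) (by simpa using hz)
    have h2 := hre c (mem_ball_self hρ)
    simp only [f, mem_ofPred_eq, sub_re]
    linarith [le_abs_self (g (c + z)).re, neg_abs_le (g c).re]
  have hmaps : MapsTo g (ball c (ρ / 2)) (closedBall (g c) (4 * R)) := fun z hz => by
    rw [mem_ball_iff_norm] at hz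
    have hBC := borelCaratheodory_zero (by positivity) hf hf_re hρ (z := z - c)
      (mem_ball_zero_iff.2 (by linarith)) (by simp [f])
    rw [mem_closedBall_iff_norm]
    calc ‖g z - g c‖ = ‖f (z - c)‖ := by simp [f]
      _ ≤ 2 * (2 * R) * ‖z - c‖ / (ρ - ‖z - c‖) := hBC
      _ ≤ 4 * R := by
        rw [div_le_iff₀ (by linarith)]
        nlinarith [norm_nonneg (z - c)]
  calc ‖deriv g c‖ ≤ 4 * R / (ρ / 2) :=
        norm_deriv_le_div_of_mapsTo_ball (hg.mono (ball_subset_ball (by linarith))) hmaps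
          (by positivity)
    _ = 8 * R / ρ := by field_simp; ring

theorem exists_norm_le_of_abs_re_le_mul_im {g : ℂ → ℂ} {r C : ℝ} (hr : 0 < r) (hC : 0 < C)
    (hg : DifferentiableOn ℂ g (UHP ∩ ball 0 r))
    (hre : ∀ z ∈ UHP ∩ ball 0 r, |(g z).re| ≤ C * z.im) :
    ∃ K, ∀ᶠ w in 𝓝[UHP] 0, ‖g w‖ ≤ K := by
  set s := UHP ∩ ball (0 : ℂ) (r / 2)
  have hderiv : ∀ w ∈ s, ‖deriv g w‖ ≤ 24 * C := by
    rintro w ⟨hw, hwr⟩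
    rw [mem_ball_zero_iff] at hwr
    have hw_im : 0 < w.im := hw
    have him_le : w.im ≤ ‖w‖ := (le_abs_self _).trans (abs_im_le_norm w)
    have hball : ∀ z ∈ ball w (w.im / 2), z ∈ UHP ∩ ball 0 r ∧ z.im ≤ 3 / 2 * w.im := by
      intro z hz
      rw [mem_ball_iff_norm] at hz
      have him_near := abs_le.1 ((abs_im_le_norm (z - w)).trans hz.le)
      rw [sub_im] at him_near
      refine ⟨⟨show 0 < z.im by linarith, mem_ball_zero_iff.2 ?_⟩, by linarith⟩
      linarith [norm_le_norm_add_norm_sub' z w]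
    calc ‖deriv g w‖ ≤ 8 * (3 * C * (w.im / 2)) / (w.im / 2) := by
          refine norm_deriv_le_of_abs_re_le (by positivity) (by positivity)
            (hg.mono fun z hz => (hball z hz).1) fun z hz => ?_
          have := hball z hz
          nlinarith [hre z this.1]
      _ = 24 * C := by field_simp; ring
  have hs : Convex ℝ s := (convex_halfSpace_im_gt 0).inter (convex_ball 0 _)
  have hgs : ∀ z ∈ s, DifferentiableAt ℂ g z := fun z hz =>
    hg.differentiableAt ((isOpen_UHP.inter isOpen_ball).mem_nhds
      ⟨hz.1, ball_subset_ball (by linarith) hz.2⟩)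
  set w₀ : ℂ := (r / 4 : ℝ) * I
  have hw₀_im : w₀.im = r / 4 := by simp [w₀]
  have hw₀_norm : ‖w₀‖ = r / 4 := by simp [w₀, abs_of_pos hr]
  have hw₀ : w₀ ∈ s := ⟨show 0 < w₀.im by linarith, mem_ball_zero_iff.2 (by linarith)⟩
  refine ⟨‖g w₀‖ + 24 * C * r, ?_⟩
  filter_upwards [inter_mem_nhdsWithin UHP (ball_mem_nhds 0 (half_pos hr))] with w hw
  have hlip := hs.norm_image_sub_le_of_norm_deriv_le hgs hderiv hw₀ hw
  have hdist : ‖w - w₀‖ ≤ r := by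
    linarith [norm_sub_le w w₀, mem_ball_zero_iff.1 hw.2, hw₀_norm]
  calc ‖g w‖ ≤ ‖g w₀‖ + ‖g w - g w₀‖ := norm_le_norm_add_norm_sub' _ _
    _ ≤ ‖g w₀‖ + 24 * C * r := by nlinarith

theorem exists_norm_le_of_tendsto_re_zero {G : ℂ → ℂ} {ε M : ℝ} (hε : 0 < ε) (hM : 0 < M)
    (hG : DifferentiableOn ℂ G UHP) (hGM : ∀ w ∈ UHP, |(G w).re| ≤ M)
    (hlim : ∀ x : ℝ, x ≠ 0 → |x| < ε → Tendsto (fun w => (G w).re) (𝓝[UHP] x) (𝓝 0)) :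
    ∃ K, ∀ᶠ w in 𝓝[UHP] 0, ‖G w‖ ≤ K := by
  obtain ⟨d, hd, hdε⟩ := exists_between hε
  have hΩ : UHP ∩ ball 0 d ⊆ UHP := inter_subset_left
  have hlim' : ∀ x : ℝ, x ≠ 0 → |x| ≤ d →
      Tendsto (fun w => (G w).re) (𝓝[UHP ∩ ball 0 d] x) (𝓝 0) := fun x hx hxd =>
    (hlim x hx (by linarith)).mono_left (nhdsWithin_mono _ hΩ)
  refine exists_norm_le_of_abs_re_le_mul_im (half_pos hd) (by positivity : 0 < M * (2 / d))
    (hG.mono inter_subset_left) fun w ⟨hw, hwd⟩ => ?_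
  rw [mem_ball_zero_iff] at hwd
  have hwΩ : w ∈ UHP ∩ ball 0 d := ⟨hw, mem_ball_zero_iff.2 (by linarith)⟩
  have hup := re_le_mul_arcMeasure hd hM.le (hG.mono hΩ)
    (fun w hw => (le_abs_self _).trans (hGM w hw.1)) hlim' hwΩ
  have hdown := re_le_mul_arcMeasure hd hM.le (hG.neg.mono hΩ)
    (fun w hw => by simpa using (neg_le_abs _).trans (hGM w hw.1))
    (fun x hx hxd => by simpa using (hlim' x hx hxd).neg) hwΩ
  have harc := mul_le_mul_of_nonneg_left (arcMeasure_le_mul_im hd hw hwd.le) hM.le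
  rw [Pi.neg_apply, neg_re] at hdown
  rw [abs_le]
  constructor <;> nlinarith

/-- Its real part is the bounded harmonic function on `UHP` with boundary values `a` on the negative
and `b` on the positive real axis. -/
noncomputable def stepPotential (a b : ℝ) (w : ℂ) : ℂ := b + ((b - a) / π : ℝ) * (I * log w)

section StepPotential

variable (a b : ℝ)

theorem stepPotential_re (w : ℂ) : (stepPotential a b w).re = b - (b - a) / π * arg w := by
  simp [stepPotential, log_im, sub_eq_add_neg]

theorem stepPotential_im (w : ℂ) :
    (stepPotential a b w).im = (b - a) / π * Real.log ‖w‖ := by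
  simp [stepPotential, log_re]

theorem differentiableOn_stepPotential : DifferentiableOn ℂ (stepPotential a b) UHP :=
  fun w (hw : 0 < w.im) => (((differentiableAt_id.clog
    (mem_slitPlane_iff.2 (Or.inr hw.ne'))).const_mul I).const_mul _ |>.const_add _)
    |>.differentiableWithinAt

theorem abs_stepPotential_re_le (w : ℂ) : |(stepPotential a b w).re| ≤ |b| + |b - a| := by
  rw [stepPotential_re]
  have : |(b - a) / π * arg w| ≤ |b - a| := by
    rw [abs_mul, abs_div, abs_of_pos Real.pi_pos]
    calc |b - a| / π * |arg w| ≤ |b - a| / π * π := by gcongr; exact abs_arg_le_pi w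
      _ = |b - a| := div_mul_cancel₀ _ Real.pi_ne_zero
  exact (abs_sub _ _).trans (by linarith)

theorem tendsto_stepPotential_re_of_neg {x : ℝ} (hx : x < 0) :
    Tendsto (fun w => (stepPotential a b w).re) (𝓝[UHP] x) (𝓝 a) := by
  have harg : Tendsto arg (𝓝[UHP] x) (𝓝 π) :=
    (tendsto_arg_nhdsWithin_im_nonneg_of_re_neg_of_im_zero (by simpa using hx)
      (by simp)).mono_left (nhdsWithin_mono _ fun z (hz : 0 < z.im) => hz.le)
  simpa [stepPotential_re, div_mul_cancel₀ _ Real.pi_ne_zero] using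
    (harg.const_mul ((b - a) / π)).const_sub b

theorem tendsto_stepPotential_re_of_pos {x : ℝ} (hx : 0 < x) :
    Tendsto (fun w => (stepPotential a b w).re) (𝓝[UHP] x) (𝓝 b) := by
  have harg : Tendsto arg (𝓝[UHP] x) (𝓝 0) := by
    simpa [arg_ofReal_of_nonneg hx.le] using
      (continuousAt_arg (ofReal_mem_slitPlane.2 hx)).tendsto.mono_left nhdsWithin_le_nhds
  simpa [stepPotential_re] using (harg.const_mul ((b - a) / π)).const_sub b

end StepPotential

theorem tendsto_sub_stepPotential_re {ε a b : ℝ} {t : ℂ → ℝ}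
    (htc : ContinuousOn t (UHP ∪ ofReal '' (Ioo (-ε) 0 ∪ Ioo 0 ε)))
    (hta : ∀ s ∈ Ioo (-ε) 0, t s = a) (htb : ∀ s ∈ Ioo 0 ε, t s = b)
    {x : ℝ} (hx : x ≠ 0) (hxε : |x| < ε) :
    Tendsto (fun w => t w - (stepPotential a b w).re) (𝓝[UHP] x) (𝓝 0) := by
  obtain ⟨hxε₁, hxε₂⟩ := abs_lt.1 hxε
  have hxS : (x : ℂ) ∈ UHP ∪ ofReal '' (Ioo (-ε) 0 ∪ Ioo 0 ε) :=
    Or.inr ⟨x, hx.lt_or_gt.imp (fun h => ⟨hxε₁, h⟩) (fun h => ⟨h, hxε₂⟩), rfl⟩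
  have ht : Tendsto t (𝓝[UHP] x) (𝓝 (t x)) := ((htc x hxS).mono subset_union_left).tendsto
  rcases hx.lt_or_gt with hneg | hpos
  · simpa [hta x ⟨hxε₁, hneg⟩] using ht.sub (tendsto_stepPotential_re_of_neg a b hneg)
  · simpa [htb x ⟨hpos, hxε₂⟩] using ht.sub (tendsto_stepPotential_re_of_pos a b hpos)

theorem tendsto_abs_atTop_of_abs_sub_mul_log_le {E : Type*} [NormedAddCommGroup E] {s : Set E}
    (hs : (0 : E) ∉ s) {f : E → ℝ} {c K : ℝ} (hc : c ≠ 0)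
    (hK : ∀ᶠ w in 𝓝[s] 0, |f w - c * Real.log ‖w‖| ≤ K) :
    Tendsto (fun w => |f w|) (𝓝[s] 0) atTop := by
  have hlog : Tendsto (fun w : E => |c| * |Real.log ‖w‖| - K) (𝓝[s] 0) atTop :=
    tendsto_atTop_add_const_right _ _ <| Tendsto.const_mul_atTop (abs_pos.2 hc) <|
      tendsto_abs_atBot_atTop.comp <| tendsto_log_norm_nhdsNE_zero.mono_left <|
        nhdsWithin_mono _ fun w hw (h : w = 0) => hs (h ▸ hw)
  refine tendsto_atTop_mono' _ ?_ hlog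
  filter_upwards [hK] with w hw
  have := abs_sub_abs_le_abs_sub (c * Real.log ‖w‖) (f w)
  rw [abs_sub_comm, abs_mul] at this
  linarith

theorem conjugate_height_diverges_at_isotropic_line_general
    (ε : ℝ) (hε : 0 < ε) (a b : ℝ) (hab : a ≠ b)
    (t tstar : ℂ → ℝ)
    (htbd : ∃ M : ℝ, ∀ w ∈ UHP, |t w| ≤ M)
    (htc : ContinuousOn t
      (UHP ∪ (Complex.ofReal '' (Set.Ioo (-ε) 0 ∪ Set.Ioo 0 ε))))
    (hta : ∀ s ∈ Set.Ioo (-ε) 0, t (s : ℂ) = a)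
    (htb : ∀ s ∈ Set.Ioo 0 ε, t (s : ℂ) = b)
    (hconj : DifferentiableOn ℂ
      (fun w => (t w : ℂ) + Complex.I * (tstar w : ℂ)) UHP) :
    Tendsto (fun w => |tstar w|) (𝓝[UHP] 0) atTop := by
  obtain ⟨M, hM⟩ := htbd
  set g : ℂ → ℂ := fun w => (t w : ℂ) + I * tstar w - stepPotential a b w
  have hg_re : ∀ w, (g w).re = t w - (stepPotential a b w).re := fun w => by simp [g]
  have hg_im : ∀ w, (g w).im = tstar w - (b - a) / π * Real.log ‖w‖ := fun w => by
    simp [g, stepPotential_im]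
  have hg_bdd : ∀ w ∈ UHP, |(g w).re| ≤ |M| + |b| + |b - a| + 1 := fun w hw => by
    rw [hg_re]
    linarith [abs_sub (t w) (stepPotential a b w).re, abs_stepPotential_re_le a b w,
      (hM w hw).trans (le_abs_self M)]
  obtain ⟨K, hK⟩ := exists_norm_le_of_tendsto_re_zero (G := g) hε (by positivity)
    (hconj.sub (differentiableOn_stepPotential a b)) hg_bdd fun x hx hxε => by
      simpa only [hg_re] using tendsto_sub_stepPotential_re htc hta htb hx hxε
  refine tendsto_abs_atTop_of_abs_sub_mul_log_le (s := UHP) (K := K) (by simp [UHP])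
    (div_ne_zero (sub_ne_zero.2 hab.symm) Real.pi_ne_zero) ?_
  filter_upwards [hK] with w hw
  exact hg_im w ▸ (abs_im_le_norm _).trans hw

/-- **Divergence of the conjugate height function at an isotropic line.**
If `t` is bounded harmonic on `ℍ`, continuous up to `(-ε,0) ∪ (0,ε)` with `t ≡ a` on
`(-ε,0)` and `t ≡ b` on `(0,ε)` where `a ≠ b`, and `t*` is a harmonic conjugate of `t`
(i.e. `t + i t*` is holomorphic on `ℍ`), then `|t*(w)| → ∞` as `w → 0` within `ℍ`:
the height function of the conjugate zero mean curvature surface diverges at the point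
corresponding to the isotropic line. -/
theorem conjugate_height_diverges_at_isotropic_line
    (ε : ℝ) (hε : 0 < ε) (a b : ℝ) (hab : a ≠ b)
    (t tstar : ℂ → ℝ)
    (ht : HarmonicOn t UHP)
    (htbd : ∃ M : ℝ, ∀ w ∈ UHP, |t w| ≤ M)
    (htc : ContinuousOn t
      (UHP ∪ (Complex.ofReal '' (Set.Ioo (-ε) 0 ∪ Set.Ioo 0 ε))))
    (hta : ∀ s ∈ Set.Ioo (-ε) 0, t (s : ℂ) = a)
    (htb : ∀ s ∈ Set.Ioo 0 ε, t (s : ℂ) = b)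
    (hconj : DifferentiableOn ℂ
      (fun w => (t w : ℂ) + Complex.I * (tstar w : ℂ)) UHP) :
    Tendsto (fun w => |tstar w|) (𝓝[UHP] 0) atTop :=
  conjugate_height_diverges_at_isotropic_line_general ε hε a b hab t tstar htbd htc hta htb hconj
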